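/- arXiv:2012.05433 — 8 statements merged into one kernel-verified Lean document; each statement's English description precedes it below -/
import Mathlib

section
/- Let n be a natural number, M an additive commutative group, s : Fin n → Fin n → M a function with s i j = s j i for all i, j, and G a simple graph on Fin n. Let T ⊆ W ⊆ Fin n be finite sets such that for every i ∈ T and every j ∈ W with G.Adj i j one has j ∈ T (i.e., T is closed under W-neighborhoods). Then Σ_{i∈T} ( Σ_{j∈W, G.Adj i j, i<j} s i j − Σ_{j∈W, G.Adj i j, j<i} s i j ) = 0. -/
/-- If `T ⊆ W` is closed under `W`-neighborhoods in `G`, then the signed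
double sum of symmetric masks over `T` (with second index ranging over `W`) vanishes. -/
theorem masks_cancel_of_closed {n : ℕ} {M : Type*} [AddCommGroup M]
    (s : Fin n → Fin n → M) (hs : ∀ i j, s i j = s j i)
    (G : SimpleGraph (Fin n)) [DecidableRel G.Adj]
    (T W : Finset (Fin n)) (hTW : T ⊆ W)
    (hclosed : ∀ i ∈ T, ∀ j ∈ W, G.Adj i j → j ∈ T) :
    ∑ i ∈ T, ((∑ j ∈ W.filter (fun j => G.Adj i j ∧ i < j), s i j)
        - ∑ j ∈ W.filter (fun j => G.Adj i j ∧ j < i), s i j) = 0 := by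
  rw [Finset.sum_sub_distrib, sub_eq_zero]
  have key : ∀ (P : Fin n → Fin n → Prop) [DecidableRel P],
      ∀ i ∈ T, W.filter (fun j => G.Adj i j ∧ P i j) =
        T.filter (fun j => G.Adj i j ∧ P i j) := by
    intro P _ i hi
    ext j
    simp only [Finset.mem_filter]
    exact ⟨fun ⟨hw, ha, hp⟩ => ⟨hclosed i hi j hw ha, ha, hp⟩,
      fun ⟨ht, ha, hp⟩ => ⟨hTW ht, ha, hp⟩⟩
  have hL : ∑ i ∈ T, ∑ j ∈ W.filter (fun j => G.Adj i j ∧ i < j), s i j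
      = ∑ i ∈ T, ∑ j ∈ T.filter (fun j => G.Adj i j ∧ i < j), s i j :=
    Finset.sum_congr rfl fun i hi => by rw [key (· < ·) i hi]
  have hR : ∑ i ∈ T, ∑ j ∈ W.filter (fun j => G.Adj i j ∧ j < i), s i j
      = ∑ i ∈ T, ∑ j ∈ T.filter (fun j => G.Adj i j ∧ j < i), s i j :=
    Finset.sum_congr rfl fun i hi => by rw [key (fun a b => b < a) i hi]
  rw [hL, hR, Finset.sum_sigma' T _ (fun i j => s i j),
    Finset.sum_sigma' T _ (fun i j => s i j)]
  refine Finset.sum_nbij' (fun x => ⟨x.2, x.1⟩) (fun x => ⟨x.2, x.1⟩) ?_ ?_ ?_ ?_ ?_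
  · intro x hx
    simp only [Finset.mem_sigma, Finset.mem_filter] at hx ⊢
    exact ⟨hx.2.1, hx.1, hx.2.2.1.symm, hx.2.2.2⟩
  · intro x hx
    simp only [Finset.mem_sigma, Finset.mem_filter] at hx ⊢
    exact ⟨hx.2.1, hx.1, hx.2.2.1.symm, hx.2.2.2⟩
  · intro x _; rfl
  · intro x _; rfl
  · intro x _; exact hs x.1 x.2
end

section
/- Fix q ∈ [0,1) with 2(1−q)⁴ > 1. Let (p_n)_{n≥2} be a sequence in (0,1] satisfying p_n > (3·√((n−1)·log(n−1)) − 1) / ((n−1)·(2(1−q)⁴ − 1)) for every n ≥ 2, and set t_n = ⌈((n−1)·p_n + √((n−1)·log(n−1)) + 1)/2⌉. Then n · Σ_{k=0}^{t_n − 1} ((n−1) choose k) · (p_n(1−q)⁴)^k · (1 − p_n(1−q)⁴)^{n−1−k} → 0 as n → ∞. -/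
/-!
Every client has `Binomial(n - 1, p (1 - q)⁴)` surviving neighbours. By Hoeffding's lemma for a
Bernoulli variable and the exponential Markov (Chernoff) bound, a binomial with `m` trials and mean
`μ` has lower tail `P(X < t) ≤ exp(-2 (μ - (t - 1))² / m)`. The lower bound on `p` is exactly what
puts the threshold `t` more than `√(m log m) - 1` below the mean, so the tail is at most
`e⁴ / m²`, and `n` times this tends to `0`.
-/

open Real Finset ProbabilityTheory MeasureTheory Filter

lemma one_sub_add_mul_exp_le {r : ℝ} (hr : r ∈ Set.Icc 0 1) (l : ℝ) :
    1 - r + r * exp l ≤ exp (r * l + l ^ 2 / 8) := by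
  have hsupp : ∀ᵐ x ∂bernoulliMeasure 1 0 ⟨r, hr⟩, x - r ∈ Set.Icc (-r) (1 - r) := by
    rw [ae_iff]
    exact bernoulliMeasure_apply_of_notMem_of_notMem _ (by measurability) (by simp) (by simp)
  have hsg := hasSubgaussianMGF_of_mem_Icc_of_integral_eq_zero (by fun_prop) hsupp
    (by simp [integral_bernoulliMeasure]; ring)
  have hmgf := hsg.mgf_le l
  simp only [mgf, integral_bernoulliMeasure] at hmgf
  norm_num at hmgf
  have h1 : exp (r * l) * exp (l * (1 - r)) = exp l := by rw [← exp_add]; ring_nf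
  have h2 : exp (r * l) * exp (-(l * r)) = 1 := by rw [← exp_add]; ring_nf; simp
  calc 1 - r + r * exp l = exp (r * l) * (r * exp (l * (1 - r)) + (1 - r) * exp (-(l * r))) := by
        linear_combination (-r) * h1 - (1 - r) * h2
    _ ≤ exp (r * l) * exp (1 / 4 * l ^ 2 / 2) := by gcongr
    _ = exp (r * l + l ^ 2 / 8) := by rw [← exp_add]; ring_nf

lemma sum_range_choose_mul_pow_le_exp_mul_pow {r l : ℝ} (hr : r ∈ Set.Icc 0 1) (hl : 0 ≤ l)
    (m t : ℕ) :
    ∑ k ∈ range t, (m.choose k : ℝ) * r ^ k * (1 - r) ^ (m - k)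
      ≤ exp (l * (t - 1)) * (1 - r + r * exp (-l)) ^ m := by
  obtain ⟨hr0, hr1⟩ := hr
  set g : ℕ → ℝ := fun k => (m.choose k : ℝ) * (r * exp (-l)) ^ k * (1 - r) ^ (m - k)
  have hg : ∀ k, 0 ≤ g k := fun k => by have := sub_nonneg.2 hr1; positivity
  have hterm : ∀ k ∈ range t,
      (m.choose k : ℝ) * r ^ k * (1 - r) ^ (m - k) ≤ exp (l * (t - 1)) * g k := by
    intro k hk
    have hkt : (k : ℝ) ≤ t - 1 := by
      have := mem_range.1 hk
      rw [le_sub_iff_add_le]; exact_mod_cast this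
    have hexp : 1 ≤ exp (l * (t - 1)) * exp (-l) ^ k := by
      rw [← exp_nat_mul, ← exp_add, one_le_exp_iff]; nlinarith
    calc (m.choose k : ℝ) * r ^ k * (1 - r) ^ (m - k)
        ≤ (m.choose k : ℝ) * r ^ k * (1 - r) ^ (m - k) * (exp (l * (t - 1)) * exp (-l) ^ k) :=
          le_mul_of_one_le_right (by have := sub_nonneg.2 hr1; positivity) hexp
      _ = exp (l * (t - 1)) * g k := by simp only [g]; ring
  have hfull : ∑ k ∈ range t, g k ≤ ∑ k ∈ range (m + 1), g k :=
    calc ∑ k ∈ range t, g k ≤ ∑ k ∈ range (max t (m + 1)), g k :=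
          sum_le_sum_of_subset_of_nonneg (range_mono (le_max_left _ _)) fun k _ _ => hg k
      _ = ∑ k ∈ range (m + 1), g k := by
          refine (sum_subset (range_mono (le_max_right _ _)) fun k _ hk => ?_).symm
          simp [g, Nat.choose_eq_zero_of_lt (by simpa using hk : m < k)]
  calc ∑ k ∈ range t, (m.choose k : ℝ) * r ^ k * (1 - r) ^ (m - k)
      ≤ exp (l * (t - 1)) * ∑ k ∈ range t, g k := by rw [mul_sum]; exact sum_le_sum hterm
    _ ≤ exp (l * (t - 1)) * ∑ k ∈ range (m + 1), g k := by gcongr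
    _ = exp (l * (t - 1)) * (1 - r + r * exp (-l)) ^ m := by
        rw [add_comm (1 - r), add_pow]
        simp only [g]
        congr 1
        exact sum_congr rfl fun k _ => by ring

/-- Hoeffding's inequality for the lower tail of a binomial distribution. -/
lemma sum_range_choose_mul_pow_le_exp {r : ℝ} (hr : r ∈ Set.Icc 0 1) {m t : ℕ} (hm : 0 < m)
    (ht : (t : ℝ) - 1 ≤ m * r) :
    ∑ k ∈ range t, (m.choose k : ℝ) * r ^ k * (1 - r) ^ (m - k)
      ≤ exp (-(2 * (m * r - (t - 1)) ^ 2 / m)) := by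
  have hm' : (0 : ℝ) < m := by exact_mod_cast hm
  set l := 4 * (m * r - (t - 1)) / m with hl
  have hl0 : 0 ≤ l := div_nonneg (by linarith) hm'.le
  have hbase : 0 ≤ 1 - r + r * exp (-l) :=
    add_nonneg (sub_nonneg.2 hr.2) (mul_nonneg hr.1 (exp_nonneg _))
  calc ∑ k ∈ range t, (m.choose k : ℝ) * r ^ k * (1 - r) ^ (m - k)
      ≤ exp (l * (t - 1)) * (1 - r + r * exp (-l)) ^ m :=
        sum_range_choose_mul_pow_le_exp_mul_pow hr hl0 m t
    _ ≤ exp (l * (t - 1)) * exp (r * -l + (-l) ^ 2 / 8) ^ m := by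
        gcongr; exact one_sub_add_mul_exp_le hr (-l)
    _ = exp (-(2 * (m * r - (t - 1)) ^ 2 / m)) := by
        rw [← exp_nat_mul, ← exp_add, hl]; congr 1; field_simp; ring

lemma one_le_sqrt_mul_log {x : ℝ} (hx : 3 ≤ x) : 1 ≤ √(x * log x) := by
  have hlog : 1 ≤ log x := by
    rw [le_log_iff_exp_le (by linarith)]
    linarith [exp_one_lt_d9]
  exact one_le_sqrt.2 (by nlinarith)

lemma sqrt_mul_log_le {x : ℝ} (hx : 0 ≤ x) : √(x * log x) ≤ x :=
  (sqrt_le_left hx).2 (by nlinarith [log_le_self hx])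

lemma sum_range_ceil_choose_mul_pow_le {m : ℕ} (hm : 3 ≤ m) {P c : ℝ} (hP : P ≤ 1) (hc : c ≤ 1)
    (hc2 : 1 < 2 * c)
    (hlb : (3 * √(m * log m) - 1) / (m * (2 * c - 1)) < P) :
    ∑ k ∈ range ⌈(m * P + √(m * log m) + 1) / 2⌉₊,
        (m.choose k : ℝ) * (P * c) ^ k * (1 - P * c) ^ (m - k)
      ≤ exp 4 / m ^ 2 := by
  have hm3 : (3 : ℝ) ≤ m := by exact_mod_cast hm
  set s := √(m * log m)
  set t := ⌈(m * P + s + 1) / 2⌉₊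
  have hs1 : 1 ≤ s := one_le_sqrt_mul_log hm3
  have hsm : s ≤ m := sqrt_mul_log_le (by linarith)
  have hs2 : s ^ 2 = m * log m := sq_sqrt (mul_nonneg (by linarith) (log_nonneg (by linarith)))
  have hden : 0 < (m : ℝ) * (2 * c - 1) := mul_pos (by linarith) (by linarith)
  have hlb' : 3 * s - 1 < P * (m * (2 * c - 1)) := (div_lt_iff₀ hden).1 hlb
  have hP0 : 0 < P := by nlinarith
  have ht : (t : ℝ) - 1 < (m * P + s + 1) / 2 := by
    have := Nat.ceil_lt_add_one (by positivity : 0 ≤ (m * P + s + 1) / 2); linarith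
  have hgap : s - 1 < m * (P * c) - (t - 1) := by nlinarith
  calc ∑ k ∈ range t, (m.choose k : ℝ) * (P * c) ^ k * (1 - P * c) ^ (m - k)
      ≤ exp (-(2 * (m * (P * c) - (t - 1)) ^ 2 / m)) :=
        sum_range_choose_mul_pow_le_exp ⟨(mul_pos hP0 (by linarith)).le, by nlinarith⟩
          (by omega) (by linarith)
    _ ≤ exp (4 - 2 * log m) := by
        -- `2 (s - 1)² ≥ 2 s² - 4 s ≥ 2 m log m - 4 m`, using `s ≤ m`
        rw [exp_le_exp, neg_le, le_div_iff₀ (by linarith)]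
        nlinarith
    _ = exp 4 / m ^ 2 := by
        rw [exp_sub, show 2 * log m = log (m ^ 2) by rw [log_pow]; push_cast; ring,
          exp_log (by positivity)]

/-- (Theorem 3 of the paper, probabilistic content.)
If `p n` exceeds the reliability threshold and
`t n = ⌈((n−1)p n + √((n−1)log(n−1)) + 1)/2⌉`, then the union bound on the reliability
failure probability, `n · P(Binomial(n−1, p n (1−q)⁴) < t n)`, tends to `0`. -/
theorem ccesa_reliability_union_bound_tendsto_zero
    (q : ℝ) (hq : q ∈ Set.Ico (0:ℝ) 1) (hq2 : 1 < 2*(1-q)^4)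
    (p : ℕ → ℝ) (hp : ∀ n, p n ∈ Set.Ioc (0:ℝ) 1)
    (hplb : ∀ n : ℕ, 2 ≤ n →
      (3 * Real.sqrt (((n:ℝ)-1) * Real.log ((n:ℝ)-1)) - 1)
        / (((n:ℝ)-1) * (2*(1-q)^4 - 1)) < p n) :
    Filter.Tendsto (fun n : ℕ =>
      (n:ℝ) * ∑ k ∈ Finset.range
          (⌈(((n:ℝ)-1) * p n + Real.sqrt (((n:ℝ)-1) * Real.log ((n:ℝ)-1)) + 1)/2⌉₊),
        ((n-1).choose k : ℝ) * (p n * (1-q)^4)^k * (1 - p n * (1-q)^4)^(n-1-k))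
      Filter.atTop (nhds 0) := by
  have hc1 : (1 - q) ^ 4 ≤ 1 := pow_le_one₀ (by linarith [hq.2]) (by linarith [hq.1])
  have hr (n : ℕ) : p n * (1 - q) ^ 4 ∈ Set.Icc 0 1 :=
    ⟨by have := (hp n).1; positivity, by nlinarith [(hp n).1, (hp n).2]⟩
  rw [← tendsto_add_atTop_iff_nat 1]
  refine squeeze_zero' (Eventually.of_forall fun n => ?_) ?_
    (tendsto_const_div_atTop_nhds_zero_nat (2 * exp 4))
  · exact mul_nonneg (by positivity)
      (sum_nonneg fun k _ => binomial_nonneg (p := ⟨_, hr (n + 1)⟩))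
  filter_upwards [eventually_ge_atTop 3] with n hn
  have hn' : (3 : ℝ) ≤ n := by exact_mod_cast hn
  push_cast
  simp only [add_sub_cancel_right]
  calc ((n : ℝ) + 1) * ∑ k ∈ range ⌈(n * p (n + 1) + √(n * log n) + 1) / 2⌉₊,
        (n.choose k : ℝ) * (p (n + 1) * (1 - q) ^ 4) ^ k * (1 - p (n + 1) * (1 - q) ^ 4) ^ (n - k)
      ≤ (n + 1) * (exp 4 / n ^ 2) := by
        gcongr
        refine sum_range_ceil_choose_mul_pow_le hn (hp _).2 hc1 hq2 ?_
        simpa using hplb (n + 1) (by omega)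
    _ ≤ (n + n) * (exp 4 / n ^ 2) := by gcongr; linarith
    _ = 2 * exp 4 / n := by field_simp; ring
end

section
/- Let n ≥ 2 and t ≥ 2 be natural numbers, and let p ∈ (0,1], q ∈ [0,1) be reals with p(1−q)⁴ < 1 and (t−1:ℝ) ≤ (n−1)·p(1−q)⁴. Then n · Σ_{k=0}^{t−1} ((n−1) choose k) · (p(1−q)⁴)^k · (1 − p(1−q)⁴)^{n−1−k} ≤ n · exp( −(n−1) · D((t−1)/(n−1) ‖ p(1−q)⁴) ), where for a, b ∈ (0,1), D(a‖b) := a·log(a/b) + (1−a)·log((1−a)/(1−b)). -/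
/-- Kullback–Leibler divergence between `Bernoulli a` and `Bernoulli b`. -/
noncomputable def klBer (a b : ℝ) : ℝ :=
  a * Real.log (a / b) + (1 - a) * Real.log ((1 - a) / (1 - b))

/-- Chernoff lower-tail bound for the binomial distribution. -/
lemma binomial_chernoff (N m : ℕ) (x : ℝ) (hx0 : 0 < x) (hx1 : x < 1)
    (hm1 : 1 ≤ m) (hmx : (m:ℝ) ≤ (N:ℝ) * x) :
    ∑ k ∈ Finset.range (m+1), (N.choose k : ℝ) * x^k * (1-x)^(N-k)
      ≤ Real.exp (-(N:ℝ) * klBer ((m:ℝ)/(N:ℝ)) x) := by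
  have hN0 : (0:ℝ) ≤ (N:ℝ) := Nat.cast_nonneg N
  have hmpos : (0:ℝ) < (m:ℝ) := by
    have : (1:ℝ) ≤ (m:ℝ) := by exact_mod_cast hm1
    linarith
  have hNpos : (0:ℝ) < (N:ℝ) := by nlinarith
  have hmN : (m:ℝ) < (N:ℝ) := by nlinarith
  obtain ⟨a, hadef⟩ : ∃ a : ℝ, a = (m:ℝ)/(N:ℝ) := ⟨_, rfl⟩
  have ha0 : 0 < a := hadef ▸ div_pos hmpos hNpos
  have hax : a ≤ x := by rw [hadef, div_le_iff₀ hNpos]; linarith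
  have ha1 : a < 1 := lt_of_le_of_lt hax hx1
  have hma : (m:ℝ) = (N:ℝ) * a := by rw [hadef]; field_simp
  obtain ⟨s, hsdef⟩ : ∃ s : ℝ, s = a * (1-x) / ((1-a) * x) := ⟨_, rfl⟩
  have hs0 : 0 < s := by
    rw [hsdef]
    apply div_pos
    · nlinarith
    · nlinarith
  have hs1 : s ≤ 1 := by
    rw [hsdef, div_le_one (by nlinarith)]
    nlinarith
  have h1a : (1:ℝ) - a ≠ 0 := by
    have : (0:ℝ) < 1 - a := by linarith
    exact this.ne'
  have hkey : s * x + (1 - x) = (1-x)/(1-a) := by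
    rw [hsdef]
    field_simp
    ring
  have hA0 : 0 < s * x + (1 - x) := by
    rw [hkey]; apply div_pos <;> linarith
  have hmn : m + 1 ≤ N + 1 := by
    have : m < N := by exact_mod_cast hmN
    omega
  have step1 : ∑ k ∈ Finset.range (m+1), (N.choose k : ℝ) * x^k * (1-x)^(N-k)
      ≤ (s * x + (1 - x))^N / s^m := by
    have hsum_le : ∑ k ∈ Finset.range (m+1), (N.choose k : ℝ) * x^k * (1-x)^(N-k)
        ≤ ∑ k ∈ Finset.range (m+1),
          ((N.choose k : ℝ) * (s*x)^k * (1 - x)^(N-k)) / s^m := by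
      apply Finset.sum_le_sum
      intro k hk
      rw [le_div_iff₀ (pow_pos hs0 m)]
      have hk' : k ≤ m := by
        have := Finset.mem_range.mp hk; omega
      have hspow : s^m ≤ s^k := pow_le_pow_of_le_one hs0.le hs1 hk'
      calc (N.choose k : ℝ) * x^k * (1 - x)^(N-k) * s^m
          ≤ (N.choose k : ℝ) * x^k * (1 - x)^(N-k) * s^k := by
            gcongr
        _ = (N.choose k : ℝ) * (s*x)^k * (1 - x)^(N-k) := by
            rw [mul_pow]; ring
    refine hsum_le.trans ?_
    rw [← Finset.sum_div, div_le_div_iff_of_pos_right (pow_pos hs0 m)]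
    have hext : ∑ k ∈ Finset.range (m+1), (N.choose k : ℝ) * (s*x)^k * (1 - x)^(N-k)
        ≤ ∑ k ∈ Finset.range (N+1), (N.choose k : ℝ) * (s*x)^k * (1 - x)^(N-k) := by
      apply Finset.sum_le_sum_of_subset_of_nonneg (Finset.range_subset_range.mpr hmn)
      intro k _ _
      exact mul_nonneg (mul_nonneg (by positivity)
        (pow_nonneg (mul_nonneg hs0.le hx0.le) _)) (pow_nonneg (by linarith) _)
    refine hext.trans_eq ?_
    rw [add_pow]
    apply Finset.sum_congr rfl
    intro k _
    ring
  refine step1.trans_eq ?_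
  have hRpos : (0:ℝ) < (s * x + (1 - x))^N / s^m := by positivity
  rw [← Real.exp_log hRpos]
  congr 1
  rw [← hadef, Real.log_div (by positivity) (by positivity), Real.log_pow, Real.log_pow,
    hkey, Real.log_div (by linarith) (by linarith), hsdef,
    Real.log_div (by nlinarith) (by nlinarith),
    Real.log_mul (by linarith) (by linarith),
    Real.log_mul (by nlinarith) (by linarith)]
  rw [klBer, Real.log_div (by linarith) (by linarith),
    Real.log_div (by linarith) (by linarith), hma]
  ring

/-- (Theorem 5 of the paper.) The union bound on the reliability failure
probability of CCESA is at most `n·exp(−(n−1)·D((t−1)/(n−1) ‖ p(1−q)⁴))`. -/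
theorem ccesa_reliability_failure_bound (n t : ℕ) (hn : 2 ≤ n) (ht : 2 ≤ t)
    (p q : ℝ) (hp : p ∈ Set.Ioc (0:ℝ) 1) (hq : q ∈ Set.Ico (0:ℝ) 1)
    (hpq : p * (1-q)^4 < 1)
    (htn : ((t:ℝ) - 1) ≤ ((n:ℝ) - 1) * (p * (1-q)^4)) :
    (n:ℝ) * ∑ k ∈ Finset.range t,
        ((n-1).choose k : ℝ) * (p * (1-q)^4)^k * (1 - p * (1-q)^4)^(n-1-k)
      ≤ (n:ℝ) * Real.exp (-((n:ℝ)-1) * klBer (((t:ℝ)-1)/((n:ℝ)-1)) (p * (1-q)^4)) := by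
  obtain ⟨hp0, hp1⟩ := hp
  obtain ⟨hq0, hq1⟩ := hq
  have hx0 : 0 < p * (1-q)^4 := mul_pos hp0 (pow_pos (by linarith) 4)
  have hNcast : ((n - 1 : ℕ) : ℝ) = (n:ℝ) - 1 := by
    have h1 : 1 ≤ n := by omega
    push_cast [h1]; ring
  have hmcast : ((t - 1 : ℕ) : ℝ) = (t:ℝ) - 1 := by
    have h1 : 1 ≤ t := by omega
    push_cast [h1]; ring
  have hrange : t = (t - 1) + 1 := by omega
  have key := binomial_chernoff (n-1) (t-1) (p * (1-q)^4) hx0 hpq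
    (by omega) (by rw [hmcast, hNcast]; exact htn)
  rw [hmcast, hNcast] at key
  rw [show t - 1 + 1 = t from by omega] at key
  exact mul_le_mul_of_nonneg_left key (Nat.cast_nonneg n)
end

section
/- Let n ≥ 1 be a natural number and p ∈ [0,1]. For ω : {(i,j) : Fin n × Fin n // i < j} → Bool define the weight w_p(ω) := ∏_{(i,j), i<j} (if ω(i,j) = true then p else 1−p), and let G(ω) be the simple graph on Fin n in which distinct vertices i, j are adjacent iff ω evaluated at (min(i,j), max(i,j)) is true. Then Σ_{ω such that G(ω) is not preconnected} w_p(ω) ≤ Σ_{k=1}^{⌊n/2⌋} (n choose k) · (1−p)^{k(n−k)}. -/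
/-!
If `G(ω)` is disconnected, the vertex set of one of its components, or its complement, is a set
`S` with `1 ≤ |S| ≤ n/2` such that none of the `|S|(n - |S|)` potential edges between `S` and its
complement is present. Edges are independent, so the `G(n,p)`-weight of this event for a fixed `S`
is `(1 - p)^(|S|(n - |S|))`, and a union bound over the `C(n,k)` sets of each size `k` gives the
claim.
-/

/-- The simple graph on `Fin n` determined by the edge indicator
`ω : {(i,j) : i < j} → Bool`: distinct vertices `i, j` are adjacent iff
`ω` evaluated at `(min i j, max i j)` is `true`. -/
def graphOf {n : ℕ} (ω : {ij : Fin n × Fin n // ij.1 < ij.2} → Bool) :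
    SimpleGraph (Fin n) where
  Adj i j := ∃ h : min i j < max i j, ω ⟨(min i j, max i j), h⟩ = true
  symm := by
    constructor
    intro i j hij
    rwa [min_comm j i, max_comm j i]
  loopless := by
    constructor
    intro i hi
    obtain ⟨h, -⟩ := hi
    simp at h

/-- The `G(n,p)` weight of an edge configuration `ω`: each potential edge independently
contributes `p` if present and `1−p` if absent. -/
noncomputable def edgeWeight {n : ℕ} (p : ℝ)
    (ω : {ij : Fin n × Fin n // ij.1 < ij.2} → Bool) : ℝ :=
  ∏ e : {ij : Fin n × Fin n // ij.1 < ij.2}, (if ω e = true then p else 1 - p)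

open Finset

theorem Finset.sum_biUnion_le_sum_sum {ι α β : Type*} [DecidableEq α] [AddCommMonoid β]
    [PartialOrder β] [IsOrderedAddMonoid β] {f : α → β}
    (hf : ∀ x, 0 ≤ f x) (s : Finset ι) (t : ι → Finset α) :
    ∑ x ∈ s.biUnion t, f x ≤ ∑ i ∈ s, ∑ x ∈ t i, f x := by
  rw [← sup_eq_biUnion]
  refine apply_sup_le_sum (f := fun u => ∑ x ∈ u, f x) sum_empty (fun {u v} => ?_) s
  rw [sup_eq_union, ← sum_union_inter]
  exact le_add_of_nonneg_right (sum_nonneg fun x _ => hf x)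

theorem sum_filter_forall_eq_false_prod_ite {ι R : Type*} [Fintype ι] [DecidableEq ι]
    [CommRing R] (p : R) (A : Finset ι) :
    ∑ ω ∈ univ.filter (fun ω : ι → Bool => ∀ i ∈ A, ω i = false),
      ∏ i, (if ω i = true then p else 1 - p) = (1 - p) ^ #A := by
  have hpi : univ.filter (fun ω : ι → Bool => ∀ i ∈ A, ω i = false) =
      Fintype.piFinset fun i => if i ∈ A then {false} else univ := by
    ext ω
    simp only [mem_filter, mem_univ, true_and, Fintype.mem_piFinset]
    refine forall_congr' fun i => ?_
    split_ifs <;> simp [*]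
  have hfactor (i : ι) : ∑ b ∈ (if i ∈ A then {false} else univ), (if b = true then p else 1 - p)
      = if i ∈ A then 1 - p else 1 := by
    split_ifs <;> simp
  rw [hpi, ← prod_univ_sum _ fun _ b => if b = true then p else 1 - p,
    Fintype.prod_congr _ _ hfactor, prod_ite_mem, univ_inter, prod_const]

namespace SimpleGraph

variable {V : Type*} [Fintype V] {G : SimpleGraph V}

theorem exists_finset_not_adj_compl_of_not_preconnected (h : ¬G.Preconnected) :
    ∃ S : Finset V, S.Nonempty ∧ #S ≤ Fintype.card V / 2 ∧ ∀ u ∈ S, ∀ v ∉ S, ¬G.Adj u v := by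
  classical
  obtain ⟨u, v, huv⟩ : ∃ u v, ¬G.Reachable u v := by simpa [Preconnected] using h
  set T : Finset V := univ.filter (G.Reachable u)
  have hT : ∀ x ∈ T, ∀ y ∉ T, ¬G.Adj x y := fun x hx y hy hxy =>
    hy (mem_filter.2 ⟨mem_univ y, (mem_filter.1 hx).2.trans hxy.reachable⟩)
  rcases le_or_gt #T (Fintype.card V / 2) with hsmall | hlarge
  · exact ⟨T, ⟨u, by simp [T]⟩, hsmall, hT⟩
  · refine ⟨Tᶜ, ⟨v, by simpa [T] using huv⟩, ?_, fun x hx y hy hxy =>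
      hT y (by simpa using hy) x (mem_compl.1 hx) hxy.symm⟩
    rw [card_compl]
    omega

end SimpleGraph

abbrev PotentialEdge (n : ℕ) := {ij : Fin n × Fin n // ij.1 < ij.2}

variable {n : ℕ}

def cutEdges (S : Finset (Fin n)) : Finset (PotentialEdge n) :=
  univ.filter fun e => (e.1.1 ∈ S ∧ e.1.2 ∉ S) ∨ (e.1.1 ∉ S ∧ e.1.2 ∈ S)

def cutFree (S : Finset (Fin n)) : Finset (PotentialEdge n → Bool) :=
  univ.filter fun ω => ∀ e ∈ cutEdges S, ω e = false

theorem card_cutEdges (S : Finset (Fin n)) : #(cutEdges S) = #S * (n - #S) := by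
  rw [show n - #S = #Sᶜ by rw [card_compl, Fintype.card_fin], ← card_product]
  refine card_bij' (fun e _ => if e.1.1 ∈ S then e.1 else e.1.swap)
    (fun ab hab => ⟨(min ab.1 ab.2, max ab.1 ab.2), min_lt_max.2 (ne_of_mem_of_not_mem
      (mem_product.1 hab).1 (mem_compl.1 (mem_product.1 hab).2))⟩) ?_ ?_ ?_ ?_
  · rintro ⟨⟨i, j⟩, hij⟩ he
    simp only [cutEdges, mem_filter, mem_univ, true_and] at he
    split_ifs <;> simp_all
  · rintro ⟨i, j⟩ hij
    simp only [mem_product, mem_compl] at hij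
    simp only [cutEdges, mem_filter, mem_univ, true_and]
    rcases le_total i j with h | h <;> simp [h, hij]
  · rintro ⟨⟨i, j⟩, hij⟩ he
    simp only [cutEdges, mem_filter, mem_univ, true_and] at he
    split_ifs <;> simp [hij.le]
  · rintro ⟨i, j⟩ hij
    simp only [mem_product, mem_compl] at hij
    rcases le_total i j with h | h <;> simp [h, hij]

theorem graphOf_adj_of_eq_true {ω : PotentialEdge n → Bool} {e : PotentialEdge n}
    (he : ω e = true) : (graphOf ω).Adj e.1.1 e.1.2 := by
  obtain ⟨⟨i, j⟩, hij⟩ := e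
  simp only [graphOf, min_eq_left hij.le, max_eq_right hij.le]
  exact ⟨hij, he⟩

theorem exists_mem_cutFree_of_not_preconnected {ω : PotentialEdge n → Bool}
    (h : ¬(graphOf ω).Preconnected) :
    ∃ S : Finset (Fin n), #S ∈ Icc 1 (n / 2) ∧ ω ∈ cutFree S := by
  obtain ⟨S, hne, hcard, hS⟩ := SimpleGraph.exists_finset_not_adj_compl_of_not_preconnected h
  refine ⟨S, mem_Icc.2 ⟨hne.card_pos, by simpa using hcard⟩,
    mem_filter.2 ⟨mem_univ ω, fun e he => ?_⟩⟩
  rw [Bool.eq_false_iff]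
  intro htrue
  have hadj := graphOf_adj_of_eq_true htrue
  rcases (mem_filter.1 he).2 with ⟨h1, h2⟩ | ⟨h1, h2⟩
  · exact hS _ h1 _ h2 hadj
  · exact hS _ h2 _ h1 hadj.symm

theorem edgeWeight_nonneg {p : ℝ} (hp : p ∈ Set.Icc (0 : ℝ) 1) (ω : PotentialEdge n → Bool) :
    0 ≤ edgeWeight p ω :=
  prod_nonneg fun _ _ => by split_ifs <;> linarith [hp.1, hp.2]

theorem sum_edgeWeight_cutFree (p : ℝ) (S : Finset (Fin n)) :
    ∑ ω ∈ cutFree S, edgeWeight p ω = (1 - p) ^ (#S * (n - #S)) := by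
  rw [← card_cutEdges]
  exact sum_filter_forall_eq_false_prod_ite p (cutEdges S)

open Classical in
theorem erdos_renyi_disconnected_prob_le_general (n : ℕ) (p : ℝ)
    (hp : p ∈ Set.Icc (0:ℝ) 1) :
    ∑ ω ∈ Finset.univ.filter
        (fun ω : {ij : Fin n × Fin n // ij.1 < ij.2} → Bool =>
          ¬ (graphOf ω).Preconnected),
      edgeWeight p ω
      ≤ ∑ k ∈ Finset.Icc 1 (n/2), (n.choose k : ℝ) * (1-p)^(k*(n-k)) := by
  have hcover : univ.filter (fun ω : PotentialEdge n → Bool => ¬(graphOf ω).Preconnected) ⊆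
      (Icc 1 (n / 2)).biUnion fun k => (powersetCard k univ).biUnion cutFree := by
    intro ω hω
    obtain ⟨S, hS, hω⟩ := exists_mem_cutFree_of_not_preconnected (mem_filter.1 hω).2
    simp only [mem_biUnion, mem_powersetCard_univ]
    exact ⟨#S, hS, S, rfl, hω⟩
  have hw := edgeWeight_nonneg (n := n) hp
  calc _ ≤ ∑ ω ∈ (Icc 1 (n / 2)).biUnion fun k => (powersetCard k univ).biUnion cutFree,
          edgeWeight p ω := sum_le_sum_of_subset_of_nonneg hcover fun ω _ _ => hw ω
    _ ≤ ∑ k ∈ Icc 1 (n / 2), ∑ S ∈ powersetCard k univ, ∑ ω ∈ cutFree S, edgeWeight p ω := by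
      grw [sum_biUnion_le_sum_sum hw]
      gcongr with k
      exact sum_biUnion_le_sum_sum hw _ _
    _ = ∑ k ∈ Icc 1 (n / 2), (n.choose k : ℝ) * (1 - p) ^ (k * (n - k)) := by
      refine sum_congr rfl fun k _ => ?_
      rw [sum_congr rfl fun S hS => by rw [sum_edgeWeight_cutFree, mem_powersetCard_univ.1 hS]]
      simp

open Classical in
theorem erdos_renyi_disconnected_prob_le (n : ℕ) (hn : 1 ≤ n) (p : ℝ)
    (hp : p ∈ Set.Icc (0:ℝ) 1) :
    ∑ ω ∈ Finset.univ.filter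
        (fun ω : {ij : Fin n × Fin n // ij.1 < ij.2} → Bool =>
          ¬ (graphOf ω).Preconnected),
      edgeWeight p ω
      ≤ ∑ k ∈ Finset.Icc 1 (n/2), (n.choose k : ℝ) * (1-p)^(k*(n-k)) :=
  erdos_renyi_disconnected_prob_le_general n p hp
end

section
/- Let n ≥ 2 be a natural number, p ∈ [0,1] a real, and t ≥ 1 a natural number such that (2t−1 : ℝ) > (n−1)·p + √((n−1)·log(n−1)). Then Σ_{k=2t−1}^{n−1} ((n−1) choose k) · p^k · (1−p)^{n−1−k} ≤ 1/(n−1)². -/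
open Real MeasureTheory ProbabilityTheory unitInterval Finset

/-! Chernoff's bound combined with Hoeffding's lemma for a Bernoulli variable gives the binomial
tail estimate `P(Bin(m, p) ≥ m p + δ) ≤ exp(-2δ²/m)`. When `δ > √(m log m)` the exponent is below
`-2 log m`, i.e. the tail is at most `1/m²`. -/

theorem centered_bernoulli_mgf_le (p : I) (t : ℝ) :
    (p : ℝ) * exp (t * (1 - p)) + (1 - p) * exp (-(t * p)) ≤ exp (t ^ 2 / 8) := by
  have hsupp : ∀ᵐ x ∂Ber((1 : ℝ), 0, p), x ∈ Set.Icc (0 : ℝ) 1 := by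
    rw [ae_iff, ← Set.compl_ofPred, Set.ofPred_mem_eq,
      bernoulliMeasure_apply_of_notMem_of_notMem _ measurableSet_Icc.compl] <;> simp
  have := (hasSubgaussianMGF_of_mem_Icc aemeasurable_id hsupp).mgf_le t
  simp only [mgf, id, integral_bernoulliMeasure] at this
  convert this using 2 <;> norm_num; ring

theorem mul_exp_add_one_sub_le_exp (p : I) (t : ℝ) :
    (p : ℝ) * exp t + (1 - p) ≤ exp (t * p + t ^ 2 / 8) := by
  calc (p : ℝ) * exp t + (1 - p)
      = exp (t * p) * ((p : ℝ) * exp (t * (1 - p)) + (1 - p) * exp (-(t * p))) := by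
        have h₁ : exp (t * p) * exp (t * (1 - p)) = exp t := by rw [← exp_add]; ring_nf
        have h₂ : exp (t * p) * exp (-(t * p)) = 1 := by rw [← exp_add, add_neg_cancel, exp_zero]
        linear_combination -(p : ℝ) * h₁ - (1 - p) * h₂
    _ ≤ exp (t * p) * exp (t ^ 2 / 8) := by gcongr; exact centered_bernoulli_mgf_le p t
    _ = exp (t * p + t ^ 2 / 8) := (exp_add _ _).symm

theorem sum_Icc_binomial_le_exp_mul (m s : ℕ) (p : I) {t : ℝ} (ht : 0 ≤ t) :
    ∑ k ∈ Icc s m, (m.choose k : ℝ) * p ^ k * (1 - p) ^ (m - k)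
      ≤ exp (-(t * s)) * ((p : ℝ) * exp t + (1 - p)) ^ m := by
  calc ∑ k ∈ Icc s m, (m.choose k : ℝ) * p ^ k * (1 - p) ^ (m - k)
      ≤ ∑ k ∈ Icc s m, (m.choose k : ℝ) * p ^ k * (1 - p) ^ (m - k) * exp (t * (k - s)) := by
        refine sum_le_sum fun k hk => le_mul_of_one_le_right binomial_nonneg (one_le_exp ?_)
        have : (s : ℝ) ≤ k := by exact_mod_cast (mem_Icc.mp hk).1
        exact mul_nonneg ht (sub_nonneg.mpr this)
    _ ≤ ∑ k ∈ range (m + 1),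
          (m.choose k : ℝ) * p ^ k * (1 - p) ^ (m - k) * exp (t * (k - s)) :=
        sum_le_sum_of_subset_of_nonneg (fun k hk => by simp at hk ⊢; omega)
          fun _ _ _ => mul_nonneg binomial_nonneg (exp_pos _).le
    _ = exp (-(t * s)) * ((p : ℝ) * exp t + (1 - p)) ^ m := by
        rw [add_pow, mul_sum]
        refine sum_congr rfl fun k _ => ?_
        rw [mul_pow, ← exp_nat_mul, show t * (k - s) = k * t + -(t * s) by ring, exp_add]
        ring

theorem sum_Icc_binomial_le_exp (m s : ℕ) (hm : 0 < m) (p : I) {δ : ℝ} (hδ : 0 ≤ δ)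
    (hs : (m : ℝ) * p + δ ≤ s) :
    ∑ k ∈ Icc s m, (m.choose k : ℝ) * p ^ k * (1 - p) ^ (m - k) ≤ exp (-(2 * δ ^ 2 / m)) := by
  have hm' : (0 : ℝ) < m := by exact_mod_cast hm
  -- `t = 4δ/m` minimises the Chernoff exponent `m t²/8 - t δ`.
  set t := 4 * δ / m with ht
  have ht0 : 0 ≤ t := by positivity
  calc ∑ k ∈ Icc s m, (m.choose k : ℝ) * p ^ k * (1 - p) ^ (m - k)
      ≤ exp (-(t * s)) * ((p : ℝ) * exp t + (1 - p)) ^ m := sum_Icc_binomial_le_exp_mul m s p ht0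
    _ ≤ exp (-(t * s)) * exp (t * p + t ^ 2 / 8) ^ m := by
        gcongr
        · exact add_nonneg (mul_nonneg p.2.1 (exp_pos _).le) (sub_nonneg.mpr p.2.2)
        · exact mul_exp_add_one_sub_le_exp p t
    _ = exp (m * (t * p + t ^ 2 / 8) - t * s) := by
        rw [← exp_nat_mul, ← exp_add]; ring_nf
    _ ≤ exp (-(2 * δ ^ 2 / m)) := by
        gcongr
        have : m * (t * p + t ^ 2 / 8) - t * (m * p + δ) = -(2 * δ ^ 2 / m) := by
          rw [ht]; field_simp; ring
        nlinarith [mul_le_mul_of_nonneg_left hs ht0]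

/-- (Proposition 1 of the paper.) If `2t−1 > (n−1)p + √((n−1)log(n−1))`,
then `P(Binomial(n−1, p) ≥ 2t−1) ≤ 1/(n−1)²`. -/
theorem unmasking_attack_prob_le (n : ℕ) (hn : 2 ≤ n) (p : ℝ)
    (hp : p ∈ Set.Icc (0:ℝ) 1) (t : ℕ) (ht : 1 ≤ t)
    (htp : ((n:ℝ)-1) * p + Real.sqrt (((n:ℝ)-1) * Real.log ((n:ℝ)-1))
      < 2 * (t:ℝ) - 1) :
    ∑ k ∈ Finset.Icc (2*t-1) (n-1),
      ((n-1).choose k : ℝ) * p ^ k * (1-p) ^ (n-1-k)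
      ≤ 1 / ((n:ℝ)-1) ^ 2 := by
  have hm : ((n - 1 : ℕ) : ℝ) = n - 1 := by push_cast [Nat.cast_sub (by omega : 1 ≤ n)]; ring
  have hs : ((2 * t - 1 : ℕ) : ℝ) = 2 * t - 1 := by
    push_cast [Nat.cast_sub (by omega : 1 ≤ 2 * t)]; ring
  have hm1 : (1 : ℝ) ≤ n - 1 := by rw [← hm]; exact_mod_cast (by omega : 1 ≤ n - 1)
  set δ := 2 * (t : ℝ) - 1 - (n - 1) * p
  have hδ : √((n - 1) * log (n - 1)) < δ := by linarith
  have hδ0 : 0 < δ := (sqrt_nonneg _).trans_lt hδ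
  have hlog : ((n : ℝ) - 1) * log (n - 1) < δ ^ 2 := (sqrt_lt' hδ0).mp hδ
  calc _ ≤ exp (-(2 * δ ^ 2 / ((n - 1 : ℕ) : ℝ))) :=
        sum_Icc_binomial_le_exp _ _ (by omega) ⟨p, hp⟩ hδ0.le (by rw [hm, hs]; linarith)
    _ ≤ exp (-(2 * log (n - 1))) := by
        rw [hm, exp_le_exp, neg_le_neg_iff, le_div_iff₀ (by linarith)]
        linarith
    _ = 1 / ((n:ℝ)-1) ^ 2 := by
        rw [exp_neg, ← Nat.cast_ofNat, ← log_pow, exp_log (by positivity), one_div]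
end

section
/- Let m ≥ 2 be a natural number and λ, C > 0 real numbers with λ > C + 2, and set k* := ⌊m·(1 − (C+2)/λ)⌋. Then Σ_{k=1}^{k*} (m choose k) · m^{−λ·k·(m−k)/m} ≤ m^{−(C+1)} / (1 − m^{−(C+1)}), where m^x denotes the real power exp(x·log m). -/
/-- (Appendix D of the paper, second lemma, bound on `c_m`.)
For `λ > C + 2` and `k* = ⌊m(1 − (C+2)/λ)⌋`,
`Σ_{k=1}^{k*} C(m,k)·m^{−λk(m−k)/m} ≤ m^{−(C+1)}/(1 − m^{−(C+1)})`. -/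
theorem appendixD_cm_bound (m : ℕ) (hm : 2 ≤ m) (lam C : ℝ)
    (hlam : 0 < lam) (hC : 0 < C) (h : C + 2 < lam) :
    ∑ k ∈ Finset.Icc 1 (⌊(m:ℝ) * (1 - (C+2)/lam)⌋₊),
      (m.choose k : ℝ) * (m:ℝ) ^ (-(lam * (k:ℝ) * ((m:ℝ) - (k:ℝ))) / (m:ℝ))
      ≤ (m:ℝ) ^ (-(C+1)) / (1 - (m:ℝ) ^ (-(C+1))) := by
  set N := ⌊(m:ℝ) * (1 - (C+2)/lam)⌋₊ with hN
  have hm1 : (1:ℝ) < (m:ℝ) := by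
    have : (2:ℝ) ≤ (m:ℝ) := by exact_mod_cast hm
    linarith
  have hm0 : (0:ℝ) < (m:ℝ) := by linarith
  set r := (m:ℝ) ^ (-(C+1)) with hr
  have hr0 : 0 < r := Real.rpow_pos_of_pos hm0 _
  have hr1 : r < 1 := by
    rw [hr]
    apply Real.rpow_lt_one_of_one_lt_of_neg hm1
    linarith
  have h1r : (0:ℝ) < 1 - r := by linarith
  have harg0 : (0:ℝ) ≤ (m:ℝ) * (1 - (C+2)/lam) := by
    have : (C+2)/lam < 1 := (div_lt_one hlam).mpr h
    nlinarith
  have hterm : ∀ k ∈ Finset.Icc 1 N,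
      (m.choose k : ℝ) * (m:ℝ) ^ (-(lam * (k:ℝ) * ((m:ℝ) - (k:ℝ))) / (m:ℝ)) ≤ r ^ k := by
    intro k hk
    obtain ⟨hk1, hkN⟩ := Finset.mem_Icc.mp hk
    have hk1R : (1:ℝ) ≤ (k:ℝ) := by exact_mod_cast hk1
    have hkR : (k:ℝ) ≤ (m:ℝ) * (1 - (C+2)/lam) :=
      le_trans (by exact_mod_cast hkN) (Nat.floor_le harg0)
    have hexp : -(lam * (k:ℝ) * ((m:ℝ) - (k:ℝ))) / (m:ℝ) ≤ -((C+2) * (k:ℝ)) := by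
      rw [div_le_iff₀ hm0]
      have h2 : (C+2)/lam * (m:ℝ) ≤ (m:ℝ) - (k:ℝ) := by nlinarith
      have h1 : (C+2) * (m:ℝ) ≤ lam * ((m:ℝ) - (k:ℝ)) := by
        calc (C+2) * (m:ℝ) = lam * ((C+2)/lam * (m:ℝ)) := by field_simp
        _ ≤ lam * ((m:ℝ) - (k:ℝ)) := mul_le_mul_of_nonneg_left h2 hlam.le
      nlinarith [mul_le_mul_of_nonneg_left h1 (le_trans zero_le_one hk1R : (0:ℝ) ≤ (k:ℝ))]
    have hchoose : (m.choose k : ℝ) ≤ (m:ℝ) ^ (k:ℝ) := by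
      rw [Real.rpow_natCast]
      exact_mod_cast Nat.choose_le_pow m k
    have hmono : (m:ℝ) ^ (-(lam * (k:ℝ) * ((m:ℝ) - (k:ℝ))) / (m:ℝ)) ≤
        (m:ℝ) ^ (-((C+2) * (k:ℝ))) :=
      Real.rpow_le_rpow_of_exponent_le hm1.le hexp
    calc (m.choose k : ℝ) * (m:ℝ) ^ (-(lam * (k:ℝ) * ((m:ℝ) - (k:ℝ))) / (m:ℝ))
        ≤ (m:ℝ) ^ (k:ℝ) * (m:ℝ) ^ (-((C+2) * (k:ℝ))) := by
          apply mul_le_mul hchoose hmono (Real.rpow_nonneg hm0.le _)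
            (Real.rpow_nonneg hm0.le _)
      _ = r ^ k := by
          rw [← Real.rpow_add hm0, show (k:ℝ) + -((C+2) * (k:ℝ)) = -(C+1) * (k:ℝ) by ring,
            Real.rpow_mul hm0.le, ← hr, Real.rpow_natCast]
  calc ∑ k ∈ Finset.Icc 1 N,
        (m.choose k : ℝ) * (m:ℝ) ^ (-(lam * (k:ℝ) * ((m:ℝ) - (k:ℝ))) / (m:ℝ))
      ≤ ∑ k ∈ Finset.Icc 1 N, r ^ k := Finset.sum_le_sum hterm
    _ ≤ r / (1 - r) := by
        have hico : Finset.Icc 1 N = Finset.Ico 1 (N+1) := by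
          rw [Finset.Ico_add_one_right_eq_Icc]
        rw [hico, Finset.sum_Ico_eq_sum_range]
        simp only [Nat.add_sub_cancel]
        have : ∀ j, r ^ (1 + j) = r * r ^ j := fun j => by rw [pow_add, pow_one]
        rw [Finset.sum_congr rfl fun j _ => this j, ← Finset.mul_sum]
        have hgeo : ∑ j ∈ Finset.range N, r ^ j ≤ 1 / (1 - r) := by
          rw [geom_sum_eq hr1.ne]
          have heq : (r ^ N - 1) / (r - 1) = (1 - r ^ N) / (1 - r) := by
            rw [← neg_sub (r ^ N) 1, ← neg_sub r 1, neg_div_neg_eq]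
          rw [heq, div_le_div_iff₀ h1r h1r]
          have : (0:ℝ) ≤ r ^ N := pow_nonneg hr0.le N
          nlinarith
        calc r * ∑ j ∈ Finset.range N, r ^ j ≤ r * (1 / (1 - r)) :=
              mul_le_mul_of_nonneg_left hgeo hr0.le
          _ = r / (1 - r) := by ring
end

section
/- Let m ≥ 2 be a natural number, λ, C > 0 real numbers with λ > C + 2, set k* := ⌊m·(1 − (C+2)/λ)⌋, and let δ be a real with 0 < δ < 1 and e·m^{−λ/2} / (1 − (C+2)/λ) ≤ δ. Then Σ_{k=k*+1}^{⌊m/2⌋} (m choose k) · m^{−λ·k·(m−k)/m} ≤ δ^{k*+1} / (1 − δ), where m^x denotes the real power exp(x·log m) and e = exp(1). -/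
/-!
For `k* < k ≤ m/2` the `k`-th term is at most `(e·m^{-λ/2}/(1 - (C+2)/λ))^k ≤ δ^k`: bound the
binomial coefficient by `(e·m/k)^k`, use `m - k ≥ m/2` in the exponent, and use
`k > m(1 - (C+2)/λ)` to replace `m/k` by `1/(1 - (C+2)/λ)`. The sum is then dominated by the
tail of a geometric series.
-/

open Real Finset Nat

theorem Nat.choose_le_exp_one_mul_div_pow (n k : ℕ) :
    (n.choose k : ℝ) ≤ (exp 1 * n / k) ^ k := by
  rcases Nat.eq_zero_or_pos k with rfl | hk
  · simp
  have hk' : (0 : ℝ) < k := by exact_mod_cast hk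
  have hfact : ((k : ℝ) / exp 1) ^ k ≤ k ! := by
    rw [div_pow, div_le_iff₀ (by positivity), exp_one_pow, ← div_le_iff₀' (by positivity)]
    exact pow_div_factorial_le_exp _ hk'.le k
  calc (n.choose k : ℝ) ≤ n ^ k / k ! := Nat.choose_le_pow_div k n
    _ ≤ n ^ k / ((k : ℝ) / exp 1) ^ k := by gcongr
    _ = (exp 1 * n / k) ^ k := by rw [← div_pow]; congr 1; field_simp

theorem rpow_neg_mul_mul_sub_div_le_pow {x : ℝ} (hx : 1 ≤ x) {lam n : ℝ} (hlam : 0 ≤ lam)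
    {k : ℕ} (hkn : 2 * k ≤ n) :
    x ^ (-(lam * k * (n - k)) / n) ≤ (x ^ (-(lam / 2))) ^ k := by
  rcases Nat.eq_zero_or_pos k with rfl | hk
  · simp
  have hn : 0 < n := by linarith [(Nat.cast_pos (α := ℝ)).mpr hk]
  rw [← rpow_natCast, ← rpow_mul (by linarith)]
  apply rpow_le_rpow_of_exponent_le hx
  rw [div_le_iff₀ hn]
  have : 0 ≤ lam * k := by positivity
  nlinarith

theorem choose_mul_rpow_le_pow {m k : ℕ} (hm : 1 ≤ m) {lam t : ℝ} (hlam : 0 ≤ lam) (ht : 0 < t)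
    (hkt : m * t ≤ k) (hkm : 2 * k ≤ m) :
    (m.choose k : ℝ) * (m : ℝ) ^ (-(lam * k * (m - k)) / m)
      ≤ (exp 1 * (m : ℝ) ^ (-(lam / 2)) / t) ^ k := by
  have hm' : (1 : ℝ) ≤ m := by exact_mod_cast hm
  have hk : (0 : ℝ) < k := lt_of_lt_of_le (by positivity) hkt
  have hratio : (m : ℝ) / k ≤ 1 / t := by rw [div_le_div_iff₀ hk ht]; linarith
  calc (m.choose k : ℝ) * (m : ℝ) ^ (-(lam * k * (m - k)) / m)
      ≤ (exp 1 * m / k) ^ k * ((m : ℝ) ^ (-(lam / 2))) ^ k := by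
        gcongr
        · exact Nat.choose_le_exp_one_mul_div_pow m k
        · exact rpow_neg_mul_mul_sub_div_le_pow hm' hlam (by exact_mod_cast hkm)
    _ = (exp 1 * (m : ℝ) ^ (-(lam / 2)) * (m / k)) ^ k := by rw [← mul_pow]; ring_nf
    _ ≤ (exp 1 * (m : ℝ) ^ (-(lam / 2)) * (1 / t)) ^ k := by gcongr
    _ = (exp 1 * (m : ℝ) ^ (-(lam / 2)) / t) ^ k := by rw [mul_one_div]

theorem appendixD_dm_bound_general (m : ℕ) (lam C δ : ℝ)
    (hlam : 0 < lam) (h : C + 2 < lam)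
    (hδ0 : 0 < δ) (hδ1 : δ < 1)
    (hδ : Real.exp 1 * (m:ℝ) ^ (-(lam/2)) / (1 - (C+2)/lam) ≤ δ) :
    ∑ k ∈ Finset.Icc (⌊(m:ℝ) * (1 - (C+2)/lam)⌋₊ + 1) (m/2),
      (m.choose k : ℝ) * (m:ℝ) ^ (-(lam * (k:ℝ) * ((m:ℝ) - (k:ℝ))) / (m:ℝ))
      ≤ δ ^ (⌊(m:ℝ) * (1 - (C+2)/lam)⌋₊ + 1) / (1 - δ) := by
  have ht : 0 < 1 - (C + 2) / lam := by rw [sub_pos, div_lt_one hlam]; exact h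
  calc _ ≤ ∑ k ∈ Icc (⌊(m:ℝ) * (1 - (C+2)/lam)⌋₊ + 1) (m / 2), δ ^ k := by
        refine sum_le_sum fun k hk => ?_
        rw [mem_Icc] at hk
        refine (choose_mul_rpow_le_pow (by omega) hlam.le ht ?_ ?_).trans ?_
        · exact (Nat.lt_floor_add_one _).le.trans (by exact_mod_cast hk.1)
        · exact_mod_cast (by omega : 2 * k ≤ m)
        · gcongr
    _ ≤ _ := by
        rw [← Ico_add_one_right_eq_Icc]
        exact geom_sum_Ico_le_of_lt_one hδ0.le hδ1

/-- (Appendix D of the paper, second lemma, bound on `d_m`.)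
For `λ > C + 2`, `k* = ⌊m(1 − (C+2)/λ)⌋` and `0 < δ < 1` with
`e·m^{−λ/2}/(1 − (C+2)/λ) ≤ δ`,
`Σ_{k=k*+1}^{⌊m/2⌋} C(m,k)·m^{−λk(m−k)/m} ≤ δ^{k*+1}/(1 − δ)`. -/
theorem appendixD_dm_bound (m : ℕ) (hm : 2 ≤ m) (lam C δ : ℝ)
    (hlam : 0 < lam) (hC : 0 < C) (h : C + 2 < lam)
    (hδ0 : 0 < δ) (hδ1 : δ < 1)
    (hδ : Real.exp 1 * (m:ℝ) ^ (-(lam/2)) / (1 - (C+2)/lam) ≤ δ) :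
    ∑ k ∈ Finset.Icc (⌊(m:ℝ) * (1 - (C+2)/lam)⌋₊ + 1) (m/2),
      (m.choose k : ℝ) * (m:ℝ) ^ (-(lam * (k:ℝ) * ((m:ℝ) - (k:ℝ))) / (m:ℝ))
      ≤ δ ^ (⌊(m:ℝ) * (1 - (C+2)/lam)⌋₊ + 1) / (1 - δ) :=
  appendixD_dm_bound_general m lam C δ hlam h hδ0 hδ1 hδ
end

section
/- Fix q ∈ [0,1) with 2(1−q)⁴ > 1. For n ≥ 2 define p*(n) := max{ log(⌈n(1−q)³ − √(n·log n)⌉) / ⌈n(1−q)³ − √(n·log n)⌉ , (3·√((n−1)·log(n−1)) − 1) / ((n−1)·(2(1−q)⁴ − 1)) } and t_n := ⌈((n−1)·p*(n) + √((n−1)·log(n−1)) + 1)/2⌉. Then there exist a constant c > 0 and a natural number N such that for all n ≥ N, n · exp( −(n−1) · D((t_n−1)/(n−1) ‖ p*(n)·(1−q)⁴) ) ≤ n · exp( −c·√(n·log n) ), where for a, b ∈ (0,1), D(a‖b) := a·log(a/b) + (1−a)·log((1−a)/(1−b)). -/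
/-- The threshold connection probability `p*(n)` of equation (5) of the paper. -/
noncomputable def pstar (q : ℝ) (n : ℕ) : ℝ :=
  max
    (Real.log (⌈(n:ℝ) * (1-q)^3 - Real.sqrt ((n:ℝ) * Real.log n)⌉₊ : ℝ)
      / (⌈(n:ℝ) * (1-q)^3 - Real.sqrt ((n:ℝ) * Real.log n)⌉₊ : ℝ))
    ((3 * Real.sqrt (((n:ℝ)-1) * Real.log ((n:ℝ)-1)) - 1)
      / (((n:ℝ)-1) * (2*(1-q)^4 - 1)))

/-- The paper's design rule for the secret-sharing threshold `t`. -/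
noncomputable def tThreshold (q : ℝ) (n : ℕ) : ℕ :=
  ⌈(((n:ℝ)-1) * pstar q n + Real.sqrt (((n:ℝ)-1) * Real.log ((n:ℝ)-1)) + 1) / 2⌉₊

open Real Filter

/-!
Write `m = n - 1`, `S = √(m log m)`, `K = 2(1-q)⁴ - 1 > 0` and `C = max (2/(1-q)³) (3/K)`.
For large `n` both terms of `p*` are at most `C S/m`. The second one, `(3S - 1)/(mK)`, opens a gap:
as `(1-q)⁴ = (1 + K)/2` while `t_n` only rounds `(m p* + S + 1)/2` up, `b - a ≥ (S - 1)/m` for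
`a = (t_n - 1)/m` and `b = p* (1-q)⁴`. Since `D(a‖b) ≥ (b - a)²/(2b)` for `0 ≤ a ≤ b < 1`, this
gives `m D(a‖b) ≥ (S - 1)²/(2CS) ≥ S/(8C)`, while `√(n log n) ≤ 2S`.
-/

lemma Real.log_le_half_sub_inv {y : ℝ} (hy : 1 ≤ y) : log y ≤ (y - y⁻¹) / 2 := by
  have hy0 : 0 < y := by linarith
  simpa [sinh_eq, exp_neg, exp_log hy0] using self_le_sinh_iff.2 (log_nonneg hy)

lemma sq_sub_sq_div_le_mul_log_div {a b : ℝ} (ha : 0 ≤ a) (hab : a ≤ b) :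
    (a ^ 2 - b ^ 2) / (2 * b) ≤ a * log (a / b) := by
  rcases ha.eq_or_lt with rfl | ha
  · rw [zero_mul]
    exact div_nonpos_of_nonpos_of_nonneg (by nlinarith) (by linarith)
  have hb : 0 < b := ha.trans_le hab
  have h := log_le_half_sub_inv ((one_le_div ha).2 hab)
  rw [inv_div] at h
  rw [show log (a / b) = -log (b / a) by rw [← log_inv, inv_div]]
  have : (a ^ 2 - b ^ 2) / (2 * b) = -(a * ((b / a - a / b) / 2)) := by field_simp; ring
  rw [this, mul_neg, neg_le_neg_iff]
  exact mul_le_mul_of_nonneg_left h ha.le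

lemma sub_le_mul_log_div_one_sub {a b : ℝ} (ha : a < 1) (hb : b < 1) :
    b - a ≤ (1 - a) * log ((1 - a) / (1 - b)) := by
  have ha' : 0 < 1 - a := by linarith
  have h := one_sub_inv_le_log_of_pos (div_pos ha' (by linarith : 0 < 1 - b))
  calc b - a = (1 - a) * (1 - ((1 - a) / (1 - b))⁻¹) := by field_simp; ring
    _ ≤ _ := mul_le_mul_of_nonneg_left h ha'.le

lemma sq_sub_div_le_klBer {a b : ℝ} (ha : 0 ≤ a) (hab : a ≤ b) (hb : b < 1) :
    (b - a) ^ 2 / (2 * b) ≤ klBer a b := by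
  rcases (ha.trans hab).eq_or_lt with rfl | hb0
  · obtain rfl : a = 0 := le_antisymm hab ha
    simp [klBer]
  have h := add_le_add (sq_sub_sq_div_le_mul_log_div ha hab)
    (sub_le_mul_log_div_one_sub (hab.trans_lt hb) hb)
  calc (b - a) ^ 2 / (2 * b) = (a ^ 2 - b ^ 2) / (2 * b) + (b - a) := by field_simp; ring
    _ ≤ klBer a b := h

lemma Real.log_le_sqrt_mul_log {x : ℝ} (hx : 1 ≤ x) : log x ≤ √(x * log x) := by
  have hlog := log_nonneg hx
  rw [le_sqrt hlog (by positivity), sq]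
  exact mul_le_mul_of_nonneg_right (log_le_self (by linarith)) hlog

lemma eventually_sqrt_mul_log_le {ε : ℝ} (hε : 0 < ε) :
    ∀ᶠ x : ℝ in atTop, √(x * log x) ≤ ε * x := by
  filter_upwards [isLittleO_log_id_atTop.bound (pow_pos hε 2), eventually_ge_atTop 1]
    with x hlog hx
  rw [norm_of_nonneg (log_nonneg hx), id, norm_of_nonneg (by linarith)] at hlog
  rw [sqrt_le_iff]
  constructor
  · positivity
  · nlinarith

lemma two_le_sqrt_mul_log {x : ℝ} (hx : 4 ≤ x) : 2 ≤ √(x * log x) := by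
  have hlog : 1 ≤ log x := by
    rw [le_log_iff_exp_le (by linarith)]
    linarith [exp_one_lt_d9]
  rw [le_sqrt (by norm_num) (by positivity)]
  nlinarith

lemma sqrt_mul_log_le_two_mul {x : ℝ} (hx : 3 ≤ x) :
    √(x * log x) ≤ 2 * √((x - 1) * log (x - 1)) := by
  have hx' : 1 ≤ x := by linarith
  have hlog : log x ≤ 2 * log (x - 1) := by
    rw [show 2 * log (x - 1) = log ((x - 1) ^ 2) by rw [log_pow]; norm_num]
    exact log_le_log (by linarith) (by nlinarith)
  calc √(x * log x) ≤ √(2 ^ 2 * ((x - 1) * log (x - 1))) := by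
        apply sqrt_le_sqrt
        nlinarith [log_nonneg hx', log_nonneg (by linarith : (1:ℝ) ≤ x - 1)]
    _ = 2 * √((x - 1) * log (x - 1)) := by rw [sqrt_mul (by norm_num), sqrt_sq (by norm_num)]

lemma threshold_gap {m K p S : ℝ} (hm : 0 < m) (hK : 0 < K) (hS : 1 ≤ S)
    (hp : (3 * S - 1) / (m * K) ≤ p) :
    (S - 1) / m ≤ p * ((1 + K) / 2) - ((⌈(m * p + S + 1) / 2⌉₊ : ℝ) - 1) / m := by
  have hpK : (3 * S - 1) / m ≤ p * K := by
    have := (div_le_iff₀ (mul_pos hm hK)).1 hp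
    rw [div_le_iff₀ hm]
    linarith
  have hp0 : 0 ≤ p := le_trans (div_nonneg (by linarith) (by positivity)) hp
  have ht := Nat.ceil_lt_add_one (by positivity : 0 ≤ (m * p + S + 1) / 2)
  have : ((⌈(m * p + S + 1) / 2⌉₊ : ℝ) - 1) / m ≤ p / 2 + (S + 1) / (2 * m) := by
    rw [div_le_iff₀ hm]
    field_simp
    linarith
  have : (S - 1) / m = (3 * S - 1) / m / 2 - (S + 1) / (2 * m) := by field_simp; ring
  linarith

lemma div_le_mul_klBer {m S C a b : ℝ} (hm : 0 < m) (hS : 2 ≤ S) (hC : 0 < C)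
    (ha : 0 ≤ a) (hgap : (S - 1) / m ≤ b - a) (hb : b ≤ C * (S / m)) (hb1 : b < 1) :
    S / (8 * C) ≤ m * klBer a b := by
  have hgap0 : 0 ≤ (S - 1) / m := div_nonneg (by linarith) hm.le
  have hb0 : 0 < b := by
    have : 0 < (S - 1) / m := div_pos (by linarith) hm
    linarith
  calc S / (8 * C) ≤ (S - 1) ^ 2 / (2 * C * S) := by
        rw [div_le_div_iff₀ (by positivity) (by positivity)]
        nlinarith [mul_nonneg (mul_nonneg (sub_nonneg.2 hS) (by linarith : 0 ≤ 3 * S - 2)) hC.le]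
    _ = m * (((S - 1) / m) ^ 2 / (2 * (C * (S / m)))) := by field_simp
    _ ≤ m * ((b - a) ^ 2 / (2 * b)) := by gcongr
    _ ≤ m * klBer a b := by gcongr; exact sq_sub_div_le_klBer ha (by linarith) hb1

lemma log_ceil_div_ceil_le {x s : ℝ} (hs0 : 0 < s) (hs1 : s ≤ 1)
    (hx : exp 1 ≤ (x - 1) * s ^ 3 / 2) (hsqrt : √(x * log x) ≤ x * s ^ 3 / 2) :
    log ⌈x * s ^ 3 - √(x * log x)⌉₊ / ⌈x * s ^ 3 - √(x * log x)⌉₊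
      ≤ 2 / s ^ 3 * (√((x - 1) * log (x - 1)) / (x - 1)) := by
  set M : ℝ := (⌈x * s ^ 3 - √(x * log x)⌉₊ : ℝ)
  set y := (x - 1) * s ^ 3 / 2 with hy
  have hy0 : 0 < y := (exp_pos 1).trans_le hx
  have hs3 : s ^ 3 ≤ 1 := pow_le_one₀ hs0.le hs1
  have hym : y ≤ x - 1 := by
    have : 0 < x - 1 := pos_of_mul_pos_left (by linarith) (by positivity : (0 : ℝ) ≤ s ^ 3)
    nlinarith
  have hm1 : 1 ≤ x - 1 := by linarith [add_one_le_exp 1]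
  have hyM : y ≤ M := by
    have := Nat.le_ceil (x * s ^ 3 - √(x * log x))
    nlinarith
  calc log M / M ≤ log y / y := log_div_self_antitoneOn hx (hx.trans hyM) hyM
    _ ≤ log (x - 1) / y := by gcongr
    _ = 2 / s ^ 3 * (log (x - 1) / (x - 1)) := by rw [hy]; field_simp
    _ ≤ 2 / s ^ 3 * (√((x - 1) * log (x - 1)) / (x - 1)) := by
        gcongr; exact log_le_sqrt_mul_log hm1

lemma pstar_le {q : ℝ} {n : ℕ} (hq : q ∈ Set.Ico 0 1) (hq2 : 1 < 2 * (1 - q) ^ 4)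
    (hn : exp 1 ≤ ((n : ℝ) - 1) * (1 - q) ^ 3 / 2)
    (hsqrt : √(n * log n) ≤ n * (1 - q) ^ 3 / 2) :
    pstar q n ≤ max (2 / (1 - q) ^ 3) (3 / (2 * (1 - q) ^ 4 - 1))
      * (√(((n : ℝ) - 1) * log ((n : ℝ) - 1)) / ((n : ℝ) - 1)) := by
  obtain ⟨hq0, hq1⟩ := hq
  have hm : 0 < (n : ℝ) - 1 := by nlinarith [exp_pos 1, pow_pos (sub_pos.2 hq1) 3]
  refine max_le ?_ ?_
  · exact (log_ceil_div_ceil_le (by linarith) (by linarith) hn hsqrt).trans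
      (by gcongr; exact le_max_left _ _)
  · calc _ ≤ 3 / (2 * (1 - q) ^ 4 - 1)
            * (√(((n : ℝ) - 1) * log ((n : ℝ) - 1)) / ((n : ℝ) - 1)) := by
          rw [div_mul_div_comm, mul_comm (2 * (1 - q) ^ 4 - 1)]
          gcongr
          linarith
      _ ≤ _ := by gcongr; exact le_max_right _ _

lemma div_le_mul_klBer_tThreshold {q C : ℝ} {n : ℕ} (hq : q ∈ Set.Ico 0 1)
    (hq2 : 1 < 2 * (1 - q) ^ 4) (hm : 0 < (n : ℝ) - 1)
    (hS : 2 ≤ √(((n : ℝ) - 1) * log ((n : ℝ) - 1))) (hC : 0 < C)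
    (hup : pstar q n ≤ C * (√(((n : ℝ) - 1) * log ((n : ℝ) - 1)) / ((n : ℝ) - 1)))
    (hsmall : C * (√(((n : ℝ) - 1) * log ((n : ℝ) - 1)) / ((n : ℝ) - 1)) < 1) :
    √(((n : ℝ) - 1) * log ((n : ℝ) - 1)) / (8 * C)
      ≤ ((n : ℝ) - 1)
        * klBer (((tThreshold q n : ℝ) - 1) / ((n : ℝ) - 1)) (pstar q n * (1 - q) ^ 4) := by
  set m : ℝ := (n : ℝ) - 1
  set S := √(m * log m)
  have hlow : (3 * S - 1) / (m * (2 * (1 - q) ^ 4 - 1)) ≤ pstar q n := le_max_right _ _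
  have hP0 : 0 ≤ pstar q n := le_trans (div_nonneg (by linarith) (by nlinarith)) hlow
  have hgap := threshold_gap hm (by linarith) (by linarith) hlow
  rw [show (1 + (2 * (1 - q) ^ 4 - 1)) / 2 = (1 - q) ^ 4 by ring] at hgap
  have ht : 0 < tThreshold q n := Nat.lt_ceil.2 (by
    have := mul_nonneg hm.le hP0
    simp only [Nat.cast_zero]
    linarith)
  have hb : pstar q n * (1 - q) ^ 4 ≤ C * (S / m) :=
    (mul_le_of_le_one_right hP0 (pow_le_one₀ (by linarith [hq.2]) (by linarith [hq.1]))).trans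
      hup
  exact div_le_mul_klBer hm hS hC (div_nonneg (sub_nonneg.2 (Nat.one_le_cast.2 ht)) hm.le)
    hgap hb (hb.trans_lt hsmall)

/-- (Appendix D of the paper.) With `p = p*(n)` and `t = t_n` chosen by
the paper's design rule, the reliability failure bound
`n·exp(−(n−1)·D((t_n−1)/(n−1) ‖ p*(n)(1−q)⁴))` is at most `n·exp(−c√(n log n))`
for some constant `c > 0` and all large `n`. -/
theorem reliability_bound_at_pstar (q : ℝ) (hq : q ∈ Set.Ico (0:ℝ) 1)
    (hq2 : 1 < 2*(1-q)^4) :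
    ∃ c : ℝ, 0 < c ∧ ∃ N : ℕ, ∀ n : ℕ, N ≤ n →
      (n:ℝ) * Real.exp (-(((n:ℝ)-1) *
          klBer (((tThreshold q n : ℝ) - 1) / ((n:ℝ)-1)) (pstar q n * (1-q)^4)))
        ≤ (n:ℝ) * Real.exp (-(c * Real.sqrt ((n:ℝ) * Real.log n))) := by
  have hs : 0 < (1 - q) ^ 3 / 2 := div_pos (pow_pos (sub_pos.2 hq.2) 3) two_pos
  set C := max (2 / (1 - q) ^ 3) (3 / (2 * (1 - q) ^ 4 - 1))
  have hC : 0 < C := lt_max_of_lt_right (div_pos three_pos (by linarith))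
  refine ⟨1 / (16 * C), by positivity, eventually_atTop.1 ?_⟩
  have hm : Tendsto (fun n : ℕ => (n : ℝ) - 1) atTop atTop :=
    tendsto_atTop_add_const_right _ _ tendsto_natCast_atTop_atTop
  filter_upwards [(hm.atTop_mul_const hs).eventually_ge_atTop (exp 1),
    tendsto_natCast_atTop_atTop.eventually (eventually_sqrt_mul_log_le hs),
    hm.eventually (eventually_ge_atTop 4),
    hm.eventually (eventually_sqrt_mul_log_le (by positivity : 0 < 1 / (2 * C)))]
    with n hexp hsqrt hn4 hsqrt_small
  set m : ℝ := (n : ℝ) - 1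
  have hm0 : 0 < m := by linarith
  have hsmall : C * (√(m * log m) / m) < 1 :=
    calc C * (√(m * log m) / m) ≤ C * (1 / (2 * C)) :=
          mul_le_mul_of_nonneg_left ((div_le_iff₀ hm0).2 hsqrt_small) hC.le
      _ < 1 := by field_simp; norm_num
  have hkl := div_le_mul_klBer_tThreshold hq hq2 hm0 (two_le_sqrt_mul_log hn4) hC
    (pstar_le hq hq2 (by linarith) (by linarith)) hsmall
  gcongr _ * exp (-?_)
  calc 1 / (16 * C) * √(n * log n) ≤ 1 / (16 * C) * (2 * √(m * log m)) := by
        gcongr; exact sqrt_mul_log_le_two_mul (by linarith)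
    _ = √(m * log m) / (8 * C) := by ring
    _ ≤ _ := hkl
end
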